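/- arXiv:0912.5512 — 3 statements merged into one kernel-verified Lean document; each statement's English description precedes it below -/
import Mathlib

section
/- Let ξ be a random variable and b_n → ∞ a sequence of positive reals. Then (1/b_n)·E(|ξ|·1{|ξ| ≤ b_n}) → 0 as n → ∞. -/
open MeasureTheory Filter Set

/-- If `ξ` is a random variable and `b_n → ∞` is a sequence of positive reals, then
`(1/b_n) E(|ξ| 1{|ξ| ≤ b_n}) → 0` as `n → ∞`. -/
theorem truncated_first_moment_small
    {Ω : Type*} [MeasurableSpace Ω] (μ : Measure Ω) [IsProbabilityMeasure μ]
    (ξ : Ω → ℝ) (hξ : Measurable ξ)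
    (b : ℕ → ℝ) (hbpos : ∀ n, 0 < b n) (hb : Tendsto b atTop atTop) :
    Tendsto (fun n => (b n)⁻¹ * ∫ ω, (if |ξ ω| ≤ b n then |ξ ω| else 0) ∂μ)
      atTop (nhds 0) := by
  have key : Tendsto (fun n => ∫ ω, (b n)⁻¹ * (if |ξ ω| ≤ b n then |ξ ω| else 0) ∂μ)
      atTop (nhds (∫ _ω, (0:ℝ) ∂μ)) := by
    apply tendsto_integral_of_dominated_convergence (fun _ => (1:ℝ))
    · intro n
      exact (measurable_const.mul
        (Measurable.ite (measurableSet_le hξ.abs measurable_const) hξ.abs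
          measurable_const)).aestronglyMeasurable
    · exact integrable_const 1
    · intro n
      filter_upwards with ω
      have hnn : (0:ℝ) ≤ (b n)⁻¹ := (inv_pos.mpr (hbpos n)).le
      by_cases h : |ξ ω| ≤ b n
      · rw [if_pos h, Real.norm_eq_abs,
          abs_of_nonneg (mul_nonneg hnn (abs_nonneg _)),
          inv_mul_le_iff₀ (hbpos n), mul_one]
        exact h
      · simp [h]
    · filter_upwards with ω
      have h1 : Tendsto (fun n => (b n)⁻¹ * |ξ ω|) atTop (nhds 0) := by
        simpa using (hb.inv_tendsto_atTop).mul_const |ξ ω|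
      apply squeeze_zero (fun n => ?_) (fun n => ?_) h1
      · by_cases h : |ξ ω| ≤ b n
        · rw [if_pos h]
          exact mul_nonneg (inv_pos.mpr (hbpos n)).le (abs_nonneg _)
        · simp [h]
      · by_cases h : |ξ ω| ≤ b n
        · simp [h]
        · rw [if_neg h, mul_zero]
          exact mul_nonneg (inv_pos.mpr (hbpos n)).le (abs_nonneg _)
  simp only [integral_zero] at key
  convert key using 2 with n
  rw [integral_const_mul]
end

section
/- Let α ∈ (0,2], let ξ satisfy E(ξ²1{|ξ|≤x})/(x^{2−α}ℓ(x)) → 1 for a slowly varying ℓ, and let b_n → ∞ be such that limsup_n n b_n^{−2} E(ξ²1{|ξ|≤b_n}) < ∞. Then for every β < α, limsup_n n b_n^{−β} E(|ξ|^β 1{|ξ|>b_n}) < ∞. -/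
/-!
If the truncated second moment `U(x) = E(ξ² 1{|ξ| ≤ x})` is regularly varying of index `2 - α`,
then `U(2x) / U(x) → 2^(2-α)`, so `U(2x) ≤ M U(x)` for large `x` with some `M < 2^(2-β)`.
On the dyadic shell `2^k x ≤ |ξ| < 2^(k+1) x` one has `|ξ|^β ≤ C (2^k x)^(β-2) ξ²`, hence
`E(|ξ|^β 1{|ξ| > x}) ≤ C Σ_k (2^k x)^(β-2) U(2^(k+1) x) ≤ C M x^(β-2) U(x) Σ_k (2^(β-2) M)^k`,
a convergent geometric series. At `x = b_n` this bounds `n b_n^(-β) E(|ξ|^β 1{|ξ| > b_n})` by a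
constant times `n b_n^(-2) U(b_n)`.
-/

open MeasureTheory Filter Topology

/-- `L` is slowly varying at infinity. -/
def SlowlyVarying (L : ℝ → ℝ) : Prop :=
  (∀ x > 0, 0 < L x) ∧ ∀ s > 0, Tendsto (fun x => L (s * x) / L x) atTop (nhds 1)

section RegularVariation

variable {f ℓ : ℝ → ℝ} {ρ s : ℝ}

theorem SlowlyVarying.tendsto_rpow_mul_div (hℓ : SlowlyVarying ℓ) (hs : 0 < s) :
    Tendsto (fun x => (s * x) ^ ρ * ℓ (s * x) / (x ^ ρ * ℓ x)) atTop (𝓝 (s ^ ρ)) := by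
  have hlim : Tendsto (fun x => s ^ ρ * (ℓ (s * x) / ℓ x)) atTop (𝓝 (s ^ ρ)) := by
    simpa using (hℓ.2 s hs).const_mul (s ^ ρ)
  refine hlim.congr' ?_
  filter_upwards [eventually_gt_atTop 0] with x hx
  rw [Real.mul_rpow hs.le hx.le]
  have := (Real.rpow_pos_of_pos hx ρ).ne'
  field_simp

theorem tendsto_comp_mul_div_of_tendsto_div_rpow_mul (hℓ : SlowlyVarying ℓ)
    (hf : Tendsto (fun x => f x / (x ^ ρ * ℓ x)) atTop (𝓝 1)) (hs : 0 < s) :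
    Tendsto (fun x => f (s * x) / f x) atTop (𝓝 (s ^ ρ)) := by
  have hfs : Tendsto (fun x => f (s * x) / ((s * x) ^ ρ * ℓ (s * x))) atTop (𝓝 1) :=
    hf.comp (tendsto_id.const_mul_atTop hs)
  have hlim := (hfs.mul (hℓ.tendsto_rpow_mul_div (ρ := ρ) hs)).div hf one_ne_zero
  rw [one_mul, div_one] at hlim
  refine hlim.congr' ?_
  filter_upwards [eventually_gt_atTop 0] with x hx
  have hg : 0 < x ^ ρ * ℓ x := mul_pos (Real.rpow_pos_of_pos hx ρ) (hℓ.1 x hx)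
  have hsx : 0 < s * x := mul_pos hs hx
  have hgs : 0 < (s * x) ^ ρ * ℓ (s * x) := mul_pos (Real.rpow_pos_of_pos hsx ρ) (hℓ.1 _ hsx)
  simp only [Pi.div_apply]
  rw [div_mul_div_cancel₀ hgs.ne', div_div_div_cancel_right₀ hg.ne']

theorem eventually_pos_of_tendsto_div_rpow_mul (hℓ : SlowlyVarying ℓ)
    (hf : Tendsto (fun x => f x / (x ^ ρ * ℓ x)) atTop (𝓝 1)) : ∀ᶠ x in atTop, 0 < f x := by
  filter_upwards [hf.eventually (eventually_gt_nhds one_pos), eventually_gt_atTop 0]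
    with x hfx hx
  exact (div_pos_iff_of_pos_right (mul_pos (Real.rpow_pos_of_pos hx ρ) (hℓ.1 x hx))).1 hfx

theorem eventually_comp_mul_le_mul_of_tendsto_div_rpow_mul (hℓ : SlowlyVarying ℓ)
    (hf : Tendsto (fun x => f x / (x ^ ρ * ℓ x)) atTop (𝓝 1)) (hs : 0 < s) {M : ℝ}
    (hM : s ^ ρ < M) : ∀ᶠ x in atTop, f (s * x) ≤ M * f x := by
  filter_upwards [(tendsto_comp_mul_div_of_tendsto_div_rpow_mul hℓ hf hs).eventually
    (eventually_lt_nhds hM), eventually_pos_of_tendsto_div_rpow_mul hℓ hf] with x hlt hpos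
  exact ((div_lt_iff₀ hpos).1 hlt).le

end RegularVariation

theorem le_pow_mul_of_forall_le_mul {f : ℝ → ℝ} {M x : ℝ} (hM : 0 ≤ M) (hx : 0 ≤ x)
    (h : ∀ y ≥ x, f (2 * y) ≤ M * f y) (k : ℕ) : f (2 ^ k * x) ≤ M ^ k * f x := by
  induction k with
  | zero => simp
  | succ k ih =>
    calc f (2 ^ (k + 1) * x) = f (2 * (2 ^ k * x)) := by ring_nf
      _ ≤ M * f (2 ^ k * x) := h _ (le_mul_of_one_le_left hx (one_le_pow₀ one_le_two))
      _ ≤ M * (M ^ k * f x) := mul_le_mul_of_nonneg_left ih hM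
      _ = M ^ (k + 1) * f x := by ring

theorem exists_two_pow_mul_le_lt {x t : ℝ} (hx : 0 < x) (hxt : x ≤ t) :
    ∃ k : ℕ, 2 ^ k * x ≤ t ∧ t < 2 ^ (k + 1) * x := by
  obtain ⟨k, hk, hk'⟩ := exists_nat_pow_near ((one_le_div hx).2 hxt) one_lt_two
  exact ⟨k, (le_div_iff₀ hx).1 hk, (div_lt_iff₀ hx).1 hk'⟩

theorem rpow_le_max_mul_rpow_mul_sq {c t : ℝ} (β : ℝ) (hc : 0 < c) (hct : c ≤ t)
    (htc : t ≤ 2 * c) : t ^ β ≤ max (2 ^ (β - 2)) 1 * c ^ (β - 2) * t ^ 2 := by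
  have ht : 0 < t := hc.trans_le hct
  have hsplit : t ^ β = t ^ (β - 2) * t ^ 2 := by
    rw [← Real.rpow_natCast, ← Real.rpow_add ht]; norm_num
  rw [hsplit]
  gcongr
  rcases le_total 0 (β - 2) with h | h
  · calc t ^ (β - 2) ≤ (2 * c) ^ (β - 2) := Real.rpow_le_rpow ht.le htc h
      _ = 2 ^ (β - 2) * c ^ (β - 2) := Real.mul_rpow zero_le_two hc.le
      _ ≤ _ := by gcongr; exact le_max_left _ _
  · calc t ^ (β - 2) ≤ c ^ (β - 2) := Real.rpow_le_rpow_of_nonpos hc hct h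
      _ ≤ _ := le_mul_of_one_le_left (by positivity) (le_max_right _ _)

theorem ofReal_ite_rpow_le_tsum {x : ℝ} (t β : ℝ) (hx : 0 < x) :
    ENNReal.ofReal (if x < t then t ^ β else 0) ≤
      ∑' k : ℕ, ENNReal.ofReal (max (2 ^ (β - 2)) 1 * (2 ^ k * x) ^ (β - 2)) *
        ENNReal.ofReal (if t ≤ 2 ^ (k + 1) * x then t ^ 2 else 0) := by
  split_ifs with hxt
  · obtain ⟨k, hk, hk'⟩ := exists_two_pow_mul_le_lt hx hxt.le
    refine le_trans ?_ (ENNReal.le_tsum k)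
    rw [if_pos hk'.le, ← ENNReal.ofReal_mul (by positivity)]
    exact ENNReal.ofReal_le_ofReal <|
      rpow_le_max_mul_rpow_mul_sq β (by positivity) hk (by rw [pow_succ] at hk'; linarith)
  · simp

section Moments

variable {Ω : Type*} [MeasurableSpace Ω] {μ : Measure Ω} {ξ : Ω → ℝ}

noncomputable def truncatedSecondMoment (μ : Measure Ω) (ξ : Ω → ℝ) (x : ℝ) : ℝ :=
  ∫ ω, (if |ξ ω| ≤ x then (ξ ω) ^ 2 else 0) ∂μ

noncomputable def tailMoment (μ : Measure Ω) (ξ : Ω → ℝ) (β x : ℝ) : ℝ :=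
  ∫ ω, (if x < |ξ ω| then |ξ ω| ^ β else 0) ∂μ

theorem truncatedSecondMoment_nonneg (x : ℝ) : 0 ≤ truncatedSecondMoment μ ξ x :=
  integral_nonneg fun ω => by dsimp only; split_ifs <;> positivity

theorem lintegral_ofReal_truncated_sq [IsFiniteMeasure μ] (hξ : Measurable ξ) (x : ℝ) :
    ∫⁻ ω, ENNReal.ofReal (if |ξ ω| ≤ x then |ξ ω| ^ 2 else 0) ∂μ =
      ENNReal.ofReal (truncatedSecondMoment μ ξ x) := by
  have hmeas : Measurable fun ω => if |ξ ω| ≤ x then |ξ ω| ^ 2 else 0 :=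
    Measurable.ite (measurableSet_le hξ.abs measurable_const) (hξ.abs.pow_const 2)
      measurable_const
  have hint : Integrable (fun ω => if |ξ ω| ≤ x then |ξ ω| ^ 2 else 0) μ := by
    refine Integrable.of_bound hmeas.aestronglyMeasurable (x ^ 2) (ae_of_all _ fun ω => ?_)
    split_ifs with h
    · rw [Real.norm_of_nonneg (by positivity)]
      exact pow_le_pow_left₀ (abs_nonneg _) h 2
    · simpa using sq_nonneg x
  rw [← ofReal_integral_eq_lintegral_ofReal hint (ae_of_all _ fun ω => by
    dsimp only; split_ifs <;> positivity)]
  simp only [sq_abs, truncatedSecondMoment]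

theorem lintegral_ofReal_tail_le_tsum [IsFiniteMeasure μ] (hξ : Measurable ξ) (β : ℝ) {x : ℝ}
    (hx : 0 < x) :
    ∫⁻ ω, ENNReal.ofReal (if x < |ξ ω| then |ξ ω| ^ β else 0) ∂μ ≤
      ∑' k : ℕ, ENNReal.ofReal (max (2 ^ (β - 2)) 1 * (2 ^ k * x) ^ (β - 2)) *
        ENNReal.ofReal (truncatedSecondMoment μ ξ (2 ^ (k + 1) * x)) := by
  have hmeas : ∀ y : ℝ,
      Measurable fun ω => ENNReal.ofReal (if |ξ ω| ≤ y then |ξ ω| ^ 2 else 0) := fun y =>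
    (Measurable.ite (measurableSet_le hξ.abs measurable_const) (hξ.abs.pow_const 2)
      measurable_const).ennreal_ofReal
  calc ∫⁻ ω, ENNReal.ofReal (if x < |ξ ω| then |ξ ω| ^ β else 0) ∂μ
      ≤ ∫⁻ ω, ∑' k : ℕ, ENNReal.ofReal (max (2 ^ (β - 2)) 1 * (2 ^ k * x) ^ (β - 2)) *
          ENNReal.ofReal (if |ξ ω| ≤ 2 ^ (k + 1) * x then |ξ ω| ^ 2 else 0) ∂μ :=
        lintegral_mono fun ω => ofReal_ite_rpow_le_tsum _ β hx
    _ = _ := by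
        rw [lintegral_tsum fun k => ((hmeas _).const_mul _).aemeasurable]
        simp only [lintegral_const_mul _ (hmeas _), lintegral_ofReal_truncated_sq hξ]

theorem lintegral_ofReal_tail_le_of_doubling [IsFiniteMeasure μ] (hξ : Measurable ξ)
    {β M x : ℝ} (hM : 0 ≤ M) (hr : 2 ^ (β - 2) * M < 1) (hx : 0 < x)
    (hdbl : ∀ y ≥ x, truncatedSecondMoment μ ξ (2 * y) ≤ M * truncatedSecondMoment μ ξ y) :
    ∫⁻ ω, ENNReal.ofReal (if x < |ξ ω| then |ξ ω| ^ β else 0) ∂μ ≤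
      ENNReal.ofReal (max (2 ^ (β - 2)) 1 * M * x ^ (β - 2) * truncatedSecondMoment μ ξ x *
        (1 - 2 ^ (β - 2) * M)⁻¹) := by
  set r : ℝ := 2 ^ (β - 2) * M
  have hr0 : 0 ≤ r := by positivity
  set A : ℝ := max (2 ^ (β - 2)) 1 * M * x ^ (β - 2) * truncatedSecondMoment μ ξ x
  have hA : 0 ≤ A := by have := truncatedSecondMoment_nonneg (μ := μ) (ξ := ξ) x; positivity
  have hterm : ∀ k : ℕ, max (2 ^ (β - 2)) 1 * (2 ^ k * x) ^ (β - 2) *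
      truncatedSecondMoment μ ξ (2 ^ (k + 1) * x) ≤ A * r ^ k := by
    intro k
    have hpow : (2 ^ k * x) ^ (β - 2) = (2 ^ (β - 2)) ^ k * x ^ (β - 2) := by
      rw [Real.mul_rpow (by positivity) hx.le, Real.rpow_pow_comm zero_le_two]
    calc _ ≤ max (2 ^ (β - 2)) 1 * (2 ^ k * x) ^ (β - 2) *
          (M ^ (k + 1) * truncatedSecondMoment μ ξ x) := by
          gcongr
          exact le_pow_mul_of_forall_le_mul hM hx.le hdbl _
      _ = A * r ^ k := by rw [hpow]; ring
  calc _ ≤ _ := lintegral_ofReal_tail_le_tsum hξ β hx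
    _ ≤ ∑' k : ℕ, ENNReal.ofReal A * ENNReal.ofReal r ^ k := ENNReal.tsum_le_tsum fun k => by
        rw [← ENNReal.ofReal_mul (by positivity), ← ENNReal.ofReal_pow hr0,
          ← ENNReal.ofReal_mul hA]
        exact ENNReal.ofReal_le_ofReal (hterm k)
    _ = ENNReal.ofReal (A * (1 - r)⁻¹) := by
        rw [ENNReal.tsum_mul_left, ENNReal.tsum_geometric, ← ENNReal.ofReal_one,
          ← ENNReal.ofReal_sub _ hr0, ← ENNReal.ofReal_inv_of_pos (sub_pos.2 hr),
          ENNReal.ofReal_mul hA]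

theorem exists_tailMoment_le_of_doubling [IsFiniteMeasure μ] (hξ : Measurable ξ) (β : ℝ)
    {M x₀ : ℝ} (hM : 0 ≤ M) (hr : 2 ^ (β - 2) * M < 1) (hx₀ : 0 < x₀)
    (hdbl : ∀ y ≥ x₀, truncatedSecondMoment μ ξ (2 * y) ≤ M * truncatedSecondMoment μ ξ y) :
    ∃ C ≥ 0, ∀ x ≥ x₀,
      tailMoment μ ξ β x ≤ C * x ^ (β - 2) * truncatedSecondMoment μ ξ x := by
  have hr1 : 0 < 1 - 2 ^ (β - 2) * M := sub_pos.2 hr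
  refine ⟨max (2 ^ (β - 2)) 1 * M * (1 - 2 ^ (β - 2) * M)⁻¹, by positivity, fun x hx => ?_⟩
  have hxpos : 0 < x := hx₀.trans_le hx
  have hmeas : Measurable fun ω => if x < |ξ ω| then |ξ ω| ^ β else 0 :=
    Measurable.ite (measurableSet_lt measurable_const hξ.abs) (hξ.abs.pow_const β)
      measurable_const
  have hU := truncatedSecondMoment_nonneg (μ := μ) (ξ := ξ) x
  rw [tailMoment, integral_eq_lintegral_of_nonneg_ae (ae_of_all _ fun ω => by
    split_ifs <;> positivity) hmeas.aestronglyMeasurable]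
  calc _ ≤ _ := ENNReal.toReal_le_of_le_ofReal (by positivity)
        (lintegral_ofReal_tail_le_of_doubling hξ hM hr hxpos fun y hy => hdbl y (hx.trans hy))
    _ = _ := by ring

end Moments

theorem tail_moment_normalization_bounded_general
    {Ω : Type*} [MeasurableSpace Ω] (μ : Measure Ω) [IsProbabilityMeasure μ]
    (ξ : Ω → ℝ) (hξ : Measurable ξ)
    (α : ℝ) (ℓ : ℝ → ℝ) (hℓ : SlowlyVarying ℓ)
    (hreg : Tendsto
      (fun x => (∫ ω, (if |ξ ω| ≤ x then (ξ ω) ^ 2 else 0) ∂μ) / (x ^ (2 - α) * ℓ x))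
      atTop (nhds 1))
    (b : ℕ → ℝ) (hb : Tendsto b atTop atTop)
    (hbound : IsBoundedUnder (· ≤ ·) atTop
      (fun n : ℕ => (n : ℝ) * (b n) ^ (-(2:ℝ)) * ∫ ω, (if |ξ ω| ≤ b n then (ξ ω) ^ 2 else 0) ∂μ)) :
    ∀ β : ℝ, β < α →
      IsBoundedUnder (· ≤ ·) atTop
        (fun n : ℕ => (n : ℝ) * (b n) ^ (-β) * ∫ ω, (if b n < |ξ ω| then |ξ ω| ^ β else 0) ∂μ) := by
  intro β hβ
  obtain ⟨M, hαM, hMβ⟩ : ∃ M, (2:ℝ) ^ (2 - α) < M ∧ M < 2 ^ (2 - β) :=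
    exists_between (Real.rpow_lt_rpow_of_exponent_lt one_lt_two (by linarith))
  have hM : 0 < M := (Real.rpow_pos_of_pos two_pos _).trans hαM
  have hr : (2:ℝ) ^ (β - 2) * M < 1 := calc
    _ < (2:ℝ) ^ (β - 2) * 2 ^ (2 - β) := by gcongr
    _ = 1 := by rw [← Real.rpow_add two_pos]; norm_num
  obtain ⟨X, hX⟩ := eventually_atTop.1 <| eventually_comp_mul_le_mul_of_tendsto_div_rpow_mul
    (f := truncatedSecondMoment μ ξ) hℓ hreg two_pos hαM
  obtain ⟨C, hC, htail⟩ := exists_tailMoment_le_of_doubling hξ β hM.le hr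
    (lt_max_of_lt_right one_pos) fun y hy => hX y ((le_max_left X 1).trans hy)
  obtain ⟨K, hK⟩ := hbound
  refine ⟨C * K, eventually_map.2 ?_⟩
  filter_upwards [eventually_map.1 hK, hb.eventually_ge_atTop (max X 1)] with n hKn hbn
  have hbn0 : 0 < b n := (lt_max_of_lt_right one_pos).trans_le hbn
  calc (n : ℝ) * b n ^ (-β) * tailMoment μ ξ β (b n)
      ≤ n * b n ^ (-β) * (C * b n ^ (β - 2) * truncatedSecondMoment μ ξ (b n)) := by
        gcongr
        exact htail _ hbn
    _ = C * (n * b n ^ (-β + (β - 2)) * truncatedSecondMoment μ ξ (b n)) := by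
        rw [Real.rpow_add hbn0]; ring
    _ = C * (n * b n ^ (-2 : ℝ) * truncatedSecondMoment μ ξ (b n)) := by ring_nf
    _ ≤ C * K := by gcongr; exact hKn

/-- Let `α ∈ (0,2]`, let `E(ξ² 1{|ξ| ≤ x})` be regularly varying of index `2 - α`, and let
`b_n → ∞` be such that `limsup_n n b_n^{-2} E(ξ² 1{|ξ| ≤ b_n}) < ∞`. Then for every `β < α`,
`limsup_n n b_n^{-β} E(|ξ|^β 1{|ξ| > b_n}) < ∞`. -/
theorem tail_moment_normalization_bounded
    {Ω : Type*} [MeasurableSpace Ω] (μ : Measure Ω) [IsProbabilityMeasure μ]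
    (ξ : Ω → ℝ) (hξ : Measurable ξ)
    (α : ℝ) (hα : α ∈ Set.Ioc (0:ℝ) 2) (ℓ : ℝ → ℝ) (hℓ : SlowlyVarying ℓ)
    (hreg : Tendsto
      (fun x => (∫ ω, (if |ξ ω| ≤ x then (ξ ω) ^ 2 else 0) ∂μ) / (x ^ (2 - α) * ℓ x))
      atTop (nhds 1))
    (b : ℕ → ℝ) (hbpos : ∀ n, 0 < b n) (hb : Tendsto b atTop atTop)
    (hbound : IsBoundedUnder (· ≤ ·) atTop
      (fun n : ℕ => (n : ℝ) * (b n) ^ (-(2:ℝ)) * ∫ ω, (if |ξ ω| ≤ b n then (ξ ω) ^ 2 else 0) ∂μ)) :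
    ∀ β : ℝ, β < α →
      IsBoundedUnder (· ≤ ·) atTop
        (fun n : ℕ => (n : ℝ) * (b n) ^ (-β) * ∫ ω, (if b n < |ξ ω| then |ξ ω| ^ β else 0) ∂μ) :=
  tail_moment_normalization_bounded_general μ ξ hξ α ℓ hℓ hreg b hb hbound
end

section
/- Let {ξ_j : j ∈ ℤ} be identically distributed, α ∈ (1,2], and suppose E(ξ₁²1{|ξ₁|≤x}) is regularly varying with index 2−α, b_n → ∞ with limsup_n n b_n^{−2}E(ξ₁²1{|ξ₁|≤b_n}) < ∞, and Σ_{k∈ℤ}|a_k| < ∞. Then for every δ > 0 and T > 0, limsup_{n→∞} P(max_{1≤l≤[nT]} |b_n^{−1} Σ_{j=1}^l Σ_{|k|>m} a_k ξ_{j−k} 1{|ξ_{j−k}| > b_n}| > δ) ≤ C · Σ_{|k|>m} |a_k| for a constant C independent of m; in particular this limsup tends to 0 as m → ∞. -/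
open MeasureTheory Filter Set ProbabilityTheory

open scoped ENNReal Topology

/-!
Since `U x = E[ξ₁² 1{|ξ₁| ≤ x}]` is regularly varying of index `2 - α < 1`, there is `ρ < 2` with
`U (2y) ≤ ρ U y` for large `y`. Splitting `{|ξ₁| > y}` into the dyadic shells
`2ⁱy < |ξ₁| ≤ 2ⁱ⁺¹y` then gives Karamata's bound `E[|ξ₁| 1{|ξ₁| > y}] ≤ K U(y) / y`.
By the triangle inequality and Markov's inequality, the maximal probability is at most
`(δ bₙ)⁻¹ Σ_{j ≤ nT} Σ_{|k|>m} |a_k| E[|ξ_{j-k}| 1{|ξ_{j-k}| > bₙ}]`. Since the `ξ_j` are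
identically distributed, this is at most `δ⁻¹ T K (n bₙ⁻² U(bₙ)) Σ_{|k|>m} |a_k|`, and
`n bₙ⁻² U(bₙ)` is bounded.
-/

theorem SlowlyVarying.tendsto_div_comp_mul {ℓ : ℝ → ℝ} (hℓ : SlowlyVarying ℓ) {U : ℝ → ℝ}
    {β : ℝ} (hU : Tendsto (fun x => U x / (x ^ β * ℓ x)) atTop (𝓝 1)) {s : ℝ} (hs : 0 < s) :
    Tendsto (fun x => U (s * x) / U x) atTop (𝓝 (s ^ β)) := by
  have hUs : Tendsto (fun x => U (s * x) / ((s * x) ^ β * ℓ (s * x))) atTop (𝓝 1) :=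
    hU.comp (tendsto_id.const_mul_atTop hs)
  have hlim := ((hUs.const_mul (s ^ β)).mul (hℓ.2 s hs)).div hU one_ne_zero
  simp only [mul_one, div_one] at hlim
  refine hlim.congr' ?_
  filter_upwards [eventually_gt_atTop 0, hU.eventually_ne one_ne_zero] with x hx hUx
  have hℓx := (hℓ.1 x hx).ne'
  have hℓsx := (hℓ.1 (s * x) (mul_pos hs hx)).ne'
  have hxβ := (Real.rpow_pos_of_pos hx β).ne'
  have hU0 : U x ≠ 0 := by rintro h; simp [h] at hUx
  have hsβ := (Real.rpow_pos_of_pos hs β).ne'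
  simp only [Pi.div_apply, Real.mul_rpow hs.le hx.le]
  field_simp

theorem SlowlyVarying.exists_doubling_bound {ℓ : ℝ → ℝ} (hℓ : SlowlyVarying ℓ) {U : ℝ → ℝ}
    {β : ℝ} (hβ : β < 1) (hU : Tendsto (fun x => U x / (x ^ β * ℓ x)) atTop (𝓝 1)) :
    ∃ ρ, 0 ≤ ρ ∧ ρ < 2 ∧ ∃ y₀, ∀ y ≥ y₀, U (2 * y) ≤ ρ * U y := by
  have h2β : (2 : ℝ) ^ β < 2 := by
    simpa using Real.rpow_lt_rpow_of_exponent_lt one_lt_two hβ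
  have hUpos : ∀ᶠ x in atTop, 0 < U x := by
    filter_upwards [eventually_gt_atTop 0, hU.eventually (eventually_gt_nhds one_pos)]
      with x hx hUx
    have hden : 0 < x ^ β * ℓ x := mul_pos (Real.rpow_pos_of_pos hx β) (hℓ.1 x hx)
    exact (div_pos_iff_of_pos_right hden).mp hUx
  have hratio := (hℓ.tendsto_div_comp_mul hU two_pos).eventually
    (eventually_lt_nhds (b := (2 ^ β + 2) / 2) (by linarith))
  obtain ⟨y₀, hy₀⟩ := eventually_atTop.mp (hUpos.and hratio)
  refine ⟨(2 ^ β + 2) / 2, by positivity, by linarith, y₀, fun y hy => ?_⟩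
  obtain ⟨hUy, hlt⟩ := hy₀ y hy
  exact ((div_lt_iff₀ hUy).mp hlt).le

section Truncation

variable {Ω : Type*} [MeasurableSpace Ω]

noncomputable def truncSecondMoment (μ : Measure Ω) (X : Ω → ℝ) (y : ℝ) : ℝ :=
  ∫ ω, (if |X ω| ≤ y then X ω ^ 2 else 0) ∂μ

theorem truncSecondMoment_nonneg {μ : Measure Ω} {X : Ω → ℝ} {y : ℝ} :
    0 ≤ truncSecondMoment μ X y :=
  integral_nonneg fun ω => by dsimp only; split_ifs <;> positivity

theorem measurable_truncSq (y : ℝ) : Measurable fun x : ℝ => if |x| ≤ y then x ^ 2 else 0 :=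
  Measurable.ite (measurableSet_le measurable_abs measurable_const) (measurable_id.pow_const 2)
    measurable_const

theorem ofReal_truncSecondMoment {μ : Measure Ω} [IsFiniteMeasure μ] {X : Ω → ℝ}
    (hX : AEMeasurable X μ) (y : ℝ) :
    ENNReal.ofReal (truncSecondMoment μ X y) =
      ∫⁻ ω, ENNReal.ofReal (if |X ω| ≤ y then X ω ^ 2 else 0) ∂μ := by
  have hbdd : ∀ ω, ‖(if |X ω| ≤ y then X ω ^ 2 else 0)‖ ≤ y ^ 2 := by
    intro ω
    split_ifs with h
    · rw [Real.norm_of_nonneg (sq_nonneg _), ← sq_abs]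
      exact pow_le_pow_left₀ (abs_nonneg _) h 2
    · simpa using sq_nonneg y
  have hmeas : AEStronglyMeasurable (fun ω => if |X ω| ≤ y then X ω ^ 2 else 0) μ :=
    ((measurable_truncSq y).comp_aemeasurable hX).aestronglyMeasurable
  refine ofReal_integral_eq_lintegral_ofReal ((integrable_const (y ^ 2)).mono' hmeas
    (Eventually.of_forall hbdd)) (Eventually.of_forall fun ω => ?_)
  dsimp only [Pi.zero_apply]
  split_ifs <;> positivity

theorem enorm_tail_le_tsum_truncSq {y : ℝ} (hy : 0 < y) (x : ℝ) :
    ‖if y < |x| then x else 0‖ₑ ≤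
      ∑' i : ℕ, ENNReal.ofReal (2 ^ i * y)⁻¹ *
        ENNReal.ofReal (if |x| ≤ 2 ^ (i + 1) * y then x ^ 2 else 0) := by
  split_ifs with hx
  · obtain ⟨i, hi, hi'⟩ := exists_nat_pow_near ((one_le_div hy).mpr hx.le) one_lt_two
    rw [le_div_iff₀ hy] at hi
    rw [div_lt_iff₀ hy] at hi'
    refine le_trans ?_ (ENNReal.le_tsum i)
    rw [Real.enorm_eq_ofReal_abs, if_pos hi'.le, ← ENNReal.ofReal_mul (by positivity)]
    refine ENNReal.ofReal_le_ofReal ?_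
    rw [le_inv_mul_iff₀ (by positivity), ← sq_abs]
    nlinarith [abs_nonneg x]
  · simp

theorem ENNReal.le_pow_mul_of_doubling {f : ℝ → ℝ≥0∞} {r : ℝ≥0∞} {y₀ y : ℝ}
    (h : ∀ z ≥ y₀, f (2 * z) ≤ r * f z) (hy : y₀ ≤ y) (hy0 : 0 ≤ y) (i : ℕ) :
    f (2 ^ i * y) ≤ r ^ i * f y := by
  induction i with
  | zero => simp
  | succ i ih =>
    have hyi : y₀ ≤ 2 ^ i * y := hy.trans (le_mul_of_one_le_left hy0 (one_le_pow₀ one_le_two))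
    calc f (2 ^ (i + 1) * y) = f (2 * (2 ^ i * y)) := by rw [pow_succ']; ring_nf
      _ ≤ r * f (2 ^ i * y) := h _ hyi
      _ ≤ r * (r ^ i * f y) := by gcongr
      _ = r ^ (i + 1) * f y := by rw [pow_succ']; ring

theorem lintegral_tail_le_of_doubling {μ : Measure Ω} [IsFiniteMeasure μ] {X : Ω → ℝ}
    (hX : AEMeasurable X μ) {ρ y₀ y : ℝ} (hρ0 : 0 ≤ ρ) (hρ2 : ρ < 2)
    (hdbl : ∀ z ≥ y₀, truncSecondMoment μ X (2 * z) ≤ ρ * truncSecondMoment μ X z)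
    (hy0 : 0 < y) (hy : y₀ ≤ y) :
    ∫⁻ ω, ‖if y < |X ω| then X ω else 0‖ₑ ∂μ ≤
      ENNReal.ofReal (ρ / (1 - ρ / 2) / y * truncSecondMoment μ X y) := by
  have hm : ∀ z, AEMeasurable (fun ω => ENNReal.ofReal (if |X ω| ≤ z then X ω ^ 2 else 0)) μ :=
    fun z => ((measurable_truncSq z).comp_aemeasurable hX).ennreal_ofReal
  set V : ℝ → ℝ≥0∞ := fun z => ∫⁻ ω, ENNReal.ofReal (if |X ω| ≤ z then X ω ^ 2 else 0) ∂μ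
  have hV : ∀ z, V z = ENNReal.ofReal (truncSecondMoment μ X z) :=
    fun z => (ofReal_truncSecondMoment hX z).symm
  have hVpow : ∀ i : ℕ, V (2 ^ i * y) ≤ ENNReal.ofReal ρ ^ i * V y := by
    refine ENNReal.le_pow_mul_of_doubling (fun z hz => ?_) hy hy0.le
    rw [hV, hV, ← ENNReal.ofReal_mul hρ0]
    exact ENNReal.ofReal_le_ofReal (hdbl z hz)
  have hgeom : ∀ i : ℕ, ENNReal.ofReal (2 ^ i * y)⁻¹ * ENNReal.ofReal ρ ^ (i + 1) =
      ENNReal.ofReal (ρ / y * (ρ / 2) ^ i) := by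
    intro i
    rw [← ENNReal.ofReal_pow hρ0, ← ENNReal.ofReal_mul (by positivity)]
    congr 1
    rw [div_pow, pow_succ]
    field_simp
  have hρ2' : ρ / 2 < 1 := by linarith
  calc ∫⁻ ω, ‖if y < |X ω| then X ω else 0‖ₑ ∂μ
      ≤ ∫⁻ ω, ∑' i : ℕ, ENNReal.ofReal (2 ^ i * y)⁻¹ *
          ENNReal.ofReal (if |X ω| ≤ 2 ^ (i + 1) * y then X ω ^ 2 else 0) ∂μ :=
        lintegral_mono fun ω => enorm_tail_le_tsum_truncSq hy0 (X ω)
    _ = ∑' i : ℕ, ENNReal.ofReal (2 ^ i * y)⁻¹ * V (2 ^ (i + 1) * y) := by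
        rw [lintegral_tsum fun i => (hm _).const_mul _]
        congr with i
        exact lintegral_const_mul'' _ (hm _)
    _ ≤ ∑' i : ℕ, ENNReal.ofReal (ρ / y * (ρ / 2) ^ i) * V y := by
        refine ENNReal.tsum_le_tsum fun i => ?_
        rw [← hgeom, mul_assoc]
        gcongr
        exact hVpow (i + 1)
    _ = ENNReal.ofReal (ρ / (1 - ρ / 2) / y * truncSecondMoment μ X y) := by
        rw [ENNReal.tsum_mul_right, ← ENNReal.ofReal_tsum_of_nonneg (fun i => by positivity)
          ((summable_geometric_of_lt_one (by positivity) hρ2').mul_left _), tsum_mul_left,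
          tsum_geometric_of_lt_one (by positivity) hρ2', hV,
          ← ENNReal.ofReal_mul (mul_nonneg (div_nonneg hρ0 hy0.le) (inv_nonneg.mpr (by linarith)))]
        congr 1
        ring

theorem SlowlyVarying.exists_lintegral_tail_le {μ : Measure Ω} [IsFiniteMeasure μ] {X : Ω → ℝ}
    (hX : AEMeasurable X μ) {ℓ : ℝ → ℝ} (hℓ : SlowlyVarying ℓ) {β : ℝ} (hβ : β < 1)
    (hU : Tendsto (fun x => truncSecondMoment μ X x / (x ^ β * ℓ x)) atTop (𝓝 1)) :
    ∃ K, 0 ≤ K ∧ ∀ᶠ y in atTop, ∫⁻ ω, ‖if y < |X ω| then X ω else 0‖ₑ ∂μ ≤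
      ENNReal.ofReal (K / y * truncSecondMoment μ X y) := by
  obtain ⟨ρ, hρ0, hρ2, y₀, hdbl⟩ := hℓ.exists_doubling_bound hβ hU
  refine ⟨ρ / (1 - ρ / 2), div_nonneg hρ0 (by linarith), ?_⟩
  filter_upwards [eventually_gt_atTop 0, eventually_ge_atTop y₀] with y hy0 hy
  exact lintegral_tail_le_of_doubling hX hρ0 hρ2 hdbl hy0 hy

end Truncation

section MaximalInequality

variable {Ω : Type*} [MeasurableSpace Ω] {μ : Measure Ω}

theorem measure_exists_abs_partialSum_gt_le {Z : ℕ → Ω → ℝ} (hZ : ∀ j, AEMeasurable (Z j) μ)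
    {c t : ℝ} (hc : 0 < c) (ht : 0 < t) (N : ℕ) :
    μ {ω | ∃ l, 1 ≤ l ∧ l ≤ N ∧ t < |c⁻¹ * ∑ j ∈ Finset.Icc 1 l, Z j ω|} ≤
      (∑ j ∈ Finset.Icc 1 N, ∫⁻ ω, ‖Z j ω‖ₑ ∂μ) / ENNReal.ofReal (t * c) := by
  calc _ ≤ μ {ω | ENNReal.ofReal (t * c) ≤ ∑ j ∈ Finset.Icc 1 N, ‖Z j ω‖ₑ} := by
        refine measure_mono fun ω ⟨l, _, hlN, hlt⟩ => ?_
        rw [abs_mul, abs_inv, abs_of_pos hc, lt_inv_mul_iff₀ hc, mul_comm] at hlt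
        calc ENNReal.ofReal (t * c) ≤ ‖∑ j ∈ Finset.Icc 1 l, Z j ω‖ₑ := by
              rw [Real.enorm_eq_ofReal_abs]
              exact ENNReal.ofReal_le_ofReal hlt.le
          _ ≤ ∑ j ∈ Finset.Icc 1 l, ‖Z j ω‖ₑ := enorm_sum_le _ _
          _ ≤ ∑ j ∈ Finset.Icc 1 N, ‖Z j ω‖ₑ :=
              Finset.sum_le_sum_of_subset (Finset.Icc_subset_Icc_right hlN)
    _ ≤ _ := by
        rw [← lintegral_finsetSum' _ fun j _ => (hZ j).enorm]
        exact meas_ge_le_lintegral_div (Finset.aemeasurable_fun_sum _ fun j _ => (hZ j).enorm)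
          (ENNReal.ofReal_pos.mpr (mul_pos ht hc)).ne' ENNReal.ofReal_ne_top

theorem lintegral_enorm_tsum_mul_le {ι : Type*} [Countable ι] (a : ι → ℝ) {Y : ι → Ω → ℝ}
    (hY : ∀ i, AEMeasurable (Y i) μ) :
    ∫⁻ ω, ‖∑' i, a i * Y i ω‖ₑ ∂μ ≤ ∑' i, ‖a i‖ₑ * ∫⁻ ω, ‖Y i ω‖ₑ ∂μ := by
  calc _ ≤ ∫⁻ ω, ∑' i, ‖a i‖ₑ * ‖Y i ω‖ₑ ∂μ :=
        lintegral_mono fun ω => enorm_tsum_le_tsum_enorm.trans_eq (by simp_rw [enorm_mul])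
    _ = _ := by
        rw [lintegral_tsum fun i => (hY i).enorm.const_mul _]
        simp_rw [lintegral_const_mul'' _ (hY _).enorm]

theorem measure_exists_abs_tail_partialSum_gt_le {ξ : ℤ → Ω → ℝ}
    (hid : ∀ j, IdentDistrib (ξ j) (ξ 1) μ μ) (p : ℤ → Prop) (a : ℤ → ℝ) {c δ : ℝ}
    (hc : 0 < c) (hδ : 0 < δ) (N : ℕ) :
    μ {ω | ∃ l, 1 ≤ l ∧ l ≤ N ∧ δ < |c⁻¹ * ∑ j ∈ Finset.Icc 1 l, ∑' k : {k : ℤ // p k},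
        a k * (if c < |ξ ((j : ℤ) - k) ω| then ξ ((j : ℤ) - k) ω else 0)|} ≤
      N * (∑' k : {k : ℤ // p k}, ‖a k‖ₑ) *
        (∫⁻ ω, ‖if c < |ξ 1 ω| then ξ 1 ω else 0‖ₑ ∂μ) / ENNReal.ofReal (δ * c) := by
  have htail : Measurable fun x : ℝ => if c < |x| then x else 0 :=
    Measurable.ite (measurableSet_lt measurable_const measurable_abs) measurable_id
      measurable_const
  have hY : ∀ j, AEMeasurable (fun ω => if c < |ξ j ω| then ξ j ω else 0) μ :=
    fun j => htail.comp_aemeasurable (hid j).aemeasurable_fst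
  have hG : ∀ j, ∫⁻ ω, ‖if c < |ξ j ω| then ξ j ω else 0‖ₑ ∂μ =
      ∫⁻ ω, ‖if c < |ξ 1 ω| then ξ 1 ω else 0‖ₑ ∂μ :=
    fun j => ((hid j).comp htail.enorm).lintegral_eq
  refine (measure_exists_abs_partialSum_gt_le
    (fun j => AEMeasurable.tsum fun k => (hY _).const_mul _) hc hδ N).trans
    (ENNReal.div_le_div_right ?_ _)
  calc _ ≤ ∑ j ∈ Finset.Icc 1 N, (∑' k : {k : ℤ // p k}, ‖a k‖ₑ) *
          ∫⁻ ω, ‖if c < |ξ 1 ω| then ξ 1 ω else 0‖ₑ ∂μ :=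
        Finset.sum_le_sum fun j _ => (lintegral_enorm_tsum_mul_le _ fun k => hY _).trans_eq
          (by simp_rw [hG, ENNReal.tsum_mul_right])
    _ = _ := by simp [mul_assoc]

theorem toReal_measure_exists_abs_tail_partialSum_gt_le {ξ : ℤ → Ω → ℝ}
    (hid : ∀ j, IdentDistrib (ξ j) (ξ 1) μ μ) (p : ℤ → Prop) {a : ℤ → ℝ}
    (ha : Summable fun k : {k : ℤ // p k} => |a k|) {c δ x g : ℝ} (hc : 0 < c) (hδ : 0 < δ)
    {N : ℕ} (hN : (N : ℝ) ≤ x)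
    (htail : ∫⁻ ω, ‖if c < |ξ 1 ω| then ξ 1 ω else 0‖ₑ ∂μ ≤ ENNReal.ofReal g) (hg : 0 ≤ g) :
    (μ {ω | ∃ l, 1 ≤ l ∧ l ≤ N ∧ δ < |c⁻¹ * ∑ j ∈ Finset.Icc 1 l, ∑' k : {k : ℤ // p k},
        a k * (if c < |ξ ((j : ℤ) - k) ω| then ξ ((j : ℤ) - k) ω else 0)|}).toReal ≤
      x * (∑' k : {k : ℤ // p k}, |a k|) * g / (δ * c) := by
  have hx : 0 ≤ x := N.cast_nonneg.trans hN
  have hs : 0 ≤ ∑' k : {k : ℤ // p k}, |a k| := tsum_nonneg fun k => abs_nonneg _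
  refine ENNReal.toReal_le_of_le_ofReal (by positivity)
    ((measure_exists_abs_tail_partialSum_gt_le hid p a hc hδ N).trans ?_)
  rw [ENNReal.ofReal_div_of_pos (mul_pos hδ hc), ENNReal.ofReal_mul (mul_nonneg hx hs),
    ENNReal.ofReal_mul hx, ENNReal.ofReal_tsum_of_nonneg (fun k => abs_nonneg _) ha]
  simp_rw [← Real.enorm_eq_ofReal_abs]
  gcongr
  rw [← ENNReal.ofReal_natCast]
  exact ENNReal.ofReal_le_ofReal hN

end MaximalInequality

theorem tendsto_tsum_subtype_lt_abs {G : Type*} [AddCommGroup G] [TopologicalSpace G]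
    [IsTopologicalAddGroup G] (f : ℤ → G) :
    Tendsto (fun m : ℕ => ∑' k : {k : ℤ // (m : ℤ) < |k|}, f k) atTop (𝓝 0) := by
  have h := (tendsto_tsum_compl_atTop_zero f).comp
    (Finset.tendsto_Icc_neg_atTop_atTop.comp tendsto_natCast_atTop_atTop)
  refine h.congr fun m => ?_
  have hm : ∀ k : ℤ, k ∉ Finset.Icc (-(m : ℤ)) m ↔ (m : ℤ) < |k| := by
    simp [← abs_le]
  exact (Equiv.subtypeEquivRight hm).tsum_eq fun k => f k

theorem limsup_le_and_tendsto_limsup_zero {u : ℕ → ℕ → ℝ} {C : ℝ} {S : ℕ → ℝ}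
    (hu : ∀ m n, 0 ≤ u m n) (hle : ∀ m, ∀ᶠ n in atTop, u m n ≤ C * S m)
    (hS : Tendsto S atTop (𝓝 0)) :
    (∀ m, limsup (u m) atTop ≤ C * S m) ∧
      Tendsto (fun m => limsup (u m) atTop) atTop (𝓝 0) := by
  have hlim : ∀ m, limsup (u m) atTop ≤ C * S m :=
    fun m => limsup_le_of_le (isCoboundedUnder_le_of_le atTop (hu m)) (hle m)
  refine ⟨hlim, squeeze_zero (fun m => ?_) hlim (by simpa using hS.const_mul C)⟩
  exact le_limsup_of_frequently_le (Frequently.of_forall (hu m)) ⟨_, hle m⟩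

theorem tail_part_negligible_alpha_gt_one_general
    {Ω : Type*} [MeasurableSpace Ω] (μ : Measure Ω) [IsProbabilityMeasure μ]
    (ξ : ℤ → Ω → ℝ)
    (hid : ∀ j : ℤ, IdentDistrib (ξ j) (ξ 1) μ μ)
    (α : ℝ) (hα : α ∈ Set.Ioc (1:ℝ) 2) (ℓ : ℝ → ℝ) (hℓ : SlowlyVarying ℓ)
    (hreg : Tendsto
      (fun x => (∫ ω, (if |ξ 1 ω| ≤ x then (ξ 1 ω) ^ 2 else 0) ∂μ) / (x ^ (2 - α) * ℓ x))
      atTop (nhds 1))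
    (b : ℕ → ℝ) (hb : Tendsto b atTop atTop)
    (hbound : IsBoundedUnder (· ≤ ·) atTop
      (fun n : ℕ => (n : ℝ) * (b n) ^ (-(2:ℝ)) *
        ∫ ω, (if |ξ 1 ω| ≤ b n then (ξ 1 ω) ^ 2 else 0) ∂μ))
    (a : ℤ → ℝ) (ha : Summable (fun k : ℤ => |a k|)) :
    ∀ δ : ℝ, 0 < δ → ∀ T : ℝ, 0 < T → ∃ C : ℝ,
      (∀ m : ℕ,
        Filter.limsup (fun n : ℕ =>
          (μ {ω | ∃ l, 1 ≤ l ∧ l ≤ ⌊(n : ℝ) * T⌋₊ ∧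
            δ < |(b n)⁻¹ * ∑ j ∈ Finset.Icc 1 l, ∑' k : {k : ℤ // (m : ℤ) < |k|},
              a k * (if b n < |ξ ((j : ℤ) - k) ω| then ξ ((j : ℤ) - k) ω else 0)|}).toReal)
          atTop ≤ C * ∑' k : {k : ℤ // (m : ℤ) < |k|}, |a k|) ∧
      Tendsto (fun m : ℕ =>
        Filter.limsup (fun n : ℕ =>
          (μ {ω | ∃ l, 1 ≤ l ∧ l ≤ ⌊(n : ℝ) * T⌋₊ ∧
            δ < |(b n)⁻¹ * ∑ j ∈ Finset.Icc 1 l, ∑' k : {k : ℤ // (m : ℤ) < |k|},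
              a k * (if b n < |ξ ((j : ℤ) - k) ω| then ξ ((j : ℤ) - k) ω else 0)|}).toReal)
          atTop) atTop (nhds 0) := by
  intro δ hδ T hT
  obtain ⟨K, hK, htail⟩ := hℓ.exists_lintegral_tail_le (hid 1).aemeasurable_fst
    (by linarith [hα.1] : 2 - α < 1) hreg
  obtain ⟨B, hB⟩ := hbound
  refine ⟨δ⁻¹ * T * K * max B 0, limsup_le_and_tendsto_limsup_zero
    (fun _ _ => ENNReal.toReal_nonneg) (fun m => ?_) (tendsto_tsum_subtype_lt_abs fun k => |a k|)⟩
  filter_upwards [hb.eventually htail, hb.eventually_gt_atTop 0, hB] with n htail_n hc hBn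
  set U := truncSecondMoment μ (ξ 1) (b n)
  calc _ ≤ n * T * (∑' k : {k : ℤ // (m : ℤ) < |k|}, |a k|) * (K / b n * U) / (δ * b n) :=
        toReal_measure_exists_abs_tail_partialSum_gt_le hid _ (ha.subtype _) hc hδ
          (Nat.floor_le (by positivity)) htail_n
          (mul_nonneg (div_nonneg hK hc.le) truncSecondMoment_nonneg)
    _ = δ⁻¹ * T * K * (∑' k : {k : ℤ // (m : ℤ) < |k|}, |a k|) * (n * b n ^ (-(2:ℝ)) * U) := by
        rw [Real.rpow_neg hc.le, Real.rpow_two]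
        field_simp
    _ ≤ _ := by
        rw [mul_right_comm]
        gcongr
        exact hBn.trans (le_max_left _ _)

/-- For identically distributed `ξ_j` with truncated second moment regularly varying of index
`2-α`, `α ∈ (1,2]`, and summable coefficients, the maximal tail-part probabilities satisfy
`limsup_n P(max_{1≤l≤⌊nT⌋} |b_n^{-1} Σ_{j=1}^l Σ_{|k|>m} a_k ξ_{j-k} 1{|ξ_{j-k}|>b_n}| > δ)
≤ C Σ_{|k|>m}|a_k|`, with `C` independent of `m`; in particular the limsup tends to `0`. -/
theorem tail_part_negligible_alpha_gt_one
    {Ω : Type*} [MeasurableSpace Ω] (μ : Measure Ω) [IsProbabilityMeasure μ]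
    (ξ : ℤ → Ω → ℝ) (hmeas : ∀ j, Measurable (ξ j))
    (hid : ∀ j : ℤ, IdentDistrib (ξ j) (ξ 1) μ μ)
    (α : ℝ) (hα : α ∈ Set.Ioc (1:ℝ) 2) (ℓ : ℝ → ℝ) (hℓ : SlowlyVarying ℓ)
    (hreg : Tendsto
      (fun x => (∫ ω, (if |ξ 1 ω| ≤ x then (ξ 1 ω) ^ 2 else 0) ∂μ) / (x ^ (2 - α) * ℓ x))
      atTop (nhds 1))
    (b : ℕ → ℝ) (hbpos : ∀ n, 0 < b n) (hb : Tendsto b atTop atTop)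
    (hbound : IsBoundedUnder (· ≤ ·) atTop
      (fun n : ℕ => (n : ℝ) * (b n) ^ (-(2:ℝ)) *
        ∫ ω, (if |ξ 1 ω| ≤ b n then (ξ 1 ω) ^ 2 else 0) ∂μ))
    (a : ℤ → ℝ) (ha : Summable (fun k : ℤ => |a k|)) :
    ∀ δ : ℝ, 0 < δ → ∀ T : ℝ, 0 < T → ∃ C : ℝ,
      (∀ m : ℕ,
        Filter.limsup (fun n : ℕ =>
          (μ {ω | ∃ l, 1 ≤ l ∧ l ≤ ⌊(n : ℝ) * T⌋₊ ∧
            δ < |(b n)⁻¹ * ∑ j ∈ Finset.Icc 1 l, ∑' k : {k : ℤ // (m : ℤ) < |k|},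
              a k * (if b n < |ξ ((j : ℤ) - k) ω| then ξ ((j : ℤ) - k) ω else 0)|}).toReal)
          atTop ≤ C * ∑' k : {k : ℤ // (m : ℤ) < |k|}, |a k|) ∧
      Tendsto (fun m : ℕ =>
        Filter.limsup (fun n : ℕ =>
          (μ {ω | ∃ l, 1 ≤ l ∧ l ≤ ⌊(n : ℝ) * T⌋₊ ∧
            δ < |(b n)⁻¹ * ∑ j ∈ Finset.Icc 1 l, ∑' k : {k : ℤ // (m : ℤ) < |k|},
              a k * (if b n < |ξ ((j : ℤ) - k) ω| then ξ ((j : ℤ) - k) ω else 0)|}).toReal)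
          atTop) atTop (nhds 0) :=
  tail_part_negligible_alpha_gt_one_general μ ξ hid α hα ℓ hℓ hreg b hb hbound a ha
end
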